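/- For c > 0, μ > 0, σ > 0: σ∫₀^c (1/√y)·φ(√y·μ/σ) dy + (μ/2)∫₀^c erfc(−√(y/2)·μ/σ) dy = cμ/2 + σ√c·φ(√c·μ/σ) + ((cμ² + σ²)/(2μ))·erf(√(c/2)·μ/σ), where φ is the standard normal density and erf, erfc the error and complementary error functions. -/

import Mathlib

open MeasureTheory Real Set intervalIntegral

/-- standard normal density -/
noncomputable def stdNormal (z : ℝ) : ℝ := (1 / Real.sqrt (2 * Real.pi)) * Real.exp (-z ^ 2 / 2)

/-- error function -/
noncomputable def erf (x : ℝ) : ℝ := (2 / Real.sqrt Real.pi) * ∫ u in (0 : ℝ)..x, Real.exp (-u ^ 2)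

/-- complementary error function -/
noncomputable def erfc (x : ℝ) : ℝ := (2 / Real.sqrt Real.pi) * ∫ u in Set.Ioi x, Real.exp (-u ^ 2)

/-!
The right-hand side, read as a function of `c`, vanishes at `c = 0`, is continuous on `[0, c]`,
and its derivative on `(0, c)` is the integrand of the left-hand side (using
`erfc (-x) = 1 + erf x`); the identity is then the fundamental theorem of calculus. The only
delicate point is that the first integrand has an integrable `1 / √y` singularity at `0`.
-/

lemma hasDerivAt_erf (x : ℝ) : HasDerivAt erf (2 / √π * exp (-x ^ 2)) x := by
  have hgauss : Continuous fun u : ℝ => exp (-u ^ 2) := by fun_prop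
  exact (integral_hasDerivAt_right (hgauss.intervalIntegrable _ _)
    (hgauss.stronglyMeasurableAtFilter _ _) hgauss.continuousAt).const_mul _

@[fun_prop]
lemma continuous_erf : Continuous erf :=
  continuous_iff_continuousAt.2 fun x => (hasDerivAt_erf x).continuousAt

@[simp]
lemma erf_zero : erf 0 = 0 := by simp [erf]

lemma erf_neg (x : ℝ) : erf (-x) = -erf x := by
  have h := integral_comp_neg (a := 0) (b := x) fun u : ℝ => exp (-u ^ 2)
  simp only [neg_sq, neg_zero] at h
  rw [erf, erf, h, integral_symm (-x) 0, mul_neg]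

lemma erfc_eq_one_sub_erf (x : ℝ) : erfc x = 1 - erf x := by
  have hint : Integrable fun u : ℝ => exp (-u ^ 2) := by
    simpa using integrable_exp_neg_mul_sq (b := 1) one_pos
  have hhalf : ∫ u in Ioi (0 : ℝ), exp (-u ^ 2) = √π / 2 := by
    simpa using integral_gaussian_Ioi 1
  have hsplit : ∫ u in Ioi x, exp (-u ^ 2)
      = (∫ u in Ioi (0 : ℝ), exp (-u ^ 2)) - ∫ u in (0 : ℝ)..x, exp (-u ^ 2) := by
    have hwhole (b : ℝ) := integral_Iic_add_Ioi (b := b) hint.integrableOn hint.integrableOn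
    rw [← integral_Iic_sub_Iic hint.integrableOn hint.integrableOn]
    linarith [hwhole x, hwhole 0]
  have hπ : √π ≠ 0 := by positivity
  rw [erfc, erf, hsplit, hhalf]
  field_simp

@[fun_prop]
lemma continuous_erfc : Continuous erfc := by
  rw [show erfc = fun x => 1 - erf x from funext erfc_eq_one_sub_erf]
  fun_prop

lemma erfc_neg (x : ℝ) : erfc (-x) = 1 + erf x := by
  rw [erfc_eq_one_sub_erf, erf_neg, sub_neg_eq_add]

@[fun_prop]
lemma continuous_stdNormal : Continuous stdNormal := by
  unfold stdNormal; fun_prop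

lemma hasDerivAt_stdNormal (z : ℝ) : HasDerivAt stdNormal (-z * stdNormal z) z := by
  have h := (((hasDerivAt_pow 2 z).fun_neg.div_const 2).exp).const_mul (1 / √(2 * π))
  refine h.congr_deriv ?_
  unfold stdNormal
  ring

lemma hasDerivAt_erf_div_sqrt_two (x : ℝ) :
    HasDerivAt (fun x => erf (x / √2)) (2 * stdNormal x) x := by
  refine ((hasDerivAt_erf (x / √2)).comp x ((hasDerivAt_id x).div_const √2)).congr_deriv ?_
  have h2 : √2 ≠ 0 := by positivity
  have hπ : √π ≠ 0 := by positivity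
  unfold stdNormal
  rw [div_pow, sq_sqrt zero_le_two, sqrt_mul zero_le_two, neg_div]
  field_simp

section SqrtScaling

variable (a : ℝ) {y : ℝ}

lemma hasDerivAt_sqrt_mul_const (hy : 0 < y) :
    HasDerivAt (fun y => √y * a) (a / (2 * √y)) y := by
  refine ((hasDerivAt_sqrt hy.ne').mul_const a).congr_deriv ?_
  ring

lemma hasDerivAt_erf_sqrt_half_mul (hy : 0 < y) :
    HasDerivAt (fun y => erf (√(y / 2) * a)) (a / √y * stdNormal (√y * a)) y := by
  have hfun : (fun y => erf (√(y / 2) * a)) = (fun x => erf (x / √2)) ∘ fun y => √y * a := by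
    ext y
    simp only [Function.comp, sqrt_div' y zero_le_two, div_mul_eq_mul_div]
  have hy' : √y ≠ 0 := by positivity
  rw [hfun]
  refine ((hasDerivAt_erf_div_sqrt_two (√y * a)).comp y
    (hasDerivAt_sqrt_mul_const a hy)).congr_deriv ?_
  field_simp

lemma hasDerivAt_sqrt_mul_stdNormal (hy : 0 < y) :
    HasDerivAt (fun y => √y * stdNormal (√y * a))
      ((1 - a ^ 2 * y) / (2 * √y) * stdNormal (√y * a)) y := by
  refine ((hasDerivAt_sqrt hy.ne').mul
    ((hasDerivAt_stdNormal (√y * a)).comp y (hasDerivAt_sqrt_mul_const a hy))).congr_deriv ?_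
  have hy' : √y ≠ 0 := by positivity
  simp only [Function.comp]
  field_simp
  rw [sq_sqrt hy.le]
  ring

end SqrtScaling

lemma intervalIntegrable_one_div_sqrt_mul {g : ℝ → ℝ} (hg : Continuous g) {c : ℝ} (hc : 0 ≤ c) :
    IntervalIntegrable (fun y => 1 / √y * g y) volume 0 c := by
  have hrpow : IntervalIntegrable (fun y : ℝ => y ^ (-(1 / 2) : ℝ)) volume 0 c :=
    intervalIntegral.intervalIntegrable_rpow' (by norm_num)
  have hsqrt : IntervalIntegrable (fun y => 1 / √y) volume 0 c := by
    refine (intervalIntegrable_congr ?_).1 hrpow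
    intro y hy
    rw [uIoc_of_le hc] at hy
    simp only [rpow_neg hy.1.le, sqrt_eq_rpow, one_div]
  exact hsqrt.mul_continuousOn hg.continuousOn

lemma hasDerivAt_expectedPassageTime {μ σ y : ℝ} (hμ : μ ≠ 0) (hσ : σ ≠ 0) (hy : 0 < y) :
    HasDerivAt (fun y => y * μ / 2 + σ * √y * stdNormal (√y * μ / σ) +
        ((y * μ ^ 2 + σ ^ 2) / (2 * μ)) * erf (√(y / 2) * μ / σ))
      (σ * (1 / √y * stdNormal (√y * μ / σ)) + μ / 2 * erfc (-√(y / 2) * μ / σ)) y := by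
  have hlin := ((hasDerivAt_id y).mul_const μ).div_const 2
  have hdens := (hasDerivAt_sqrt_mul_stdNormal (μ / σ) hy).const_mul σ
  have herf := ((((hasDerivAt_id y).mul_const (μ ^ 2)).add_const (σ ^ 2)).div_const (2 * μ)).mul
    (hasDerivAt_erf_sqrt_half_mul (μ / σ) hy)
  have hy' : √y ≠ 0 := by positivity
  refine (((hlin.add hdens).add herf).congr_deriv ?_).congr_of_eventuallyEq
    (.of_forall fun x => ?_)
  · rw [neg_mul, neg_div, erfc_neg]
    simp only [id, mul_div_assoc]
    field_simp
    ring
  · simp only [Pi.add_apply, Pi.mul_apply, id, mul_div_assoc, mul_assoc]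

theorem expected_first_passage_time_formula
    (μ σ c : ℝ) (hμ : 0 < μ) (hσ : 0 < σ) (hc : 0 < c) :
    σ * (∫ y in (0 : ℝ)..c, (1 / Real.sqrt y) * stdNormal (Real.sqrt y * μ / σ)) +
        (μ / 2) * (∫ y in (0 : ℝ)..c, erfc (-Real.sqrt (y / 2) * μ / σ))
      = c * μ / 2 + σ * Real.sqrt c * stdNormal (Real.sqrt c * μ / σ) +
          ((c * μ ^ 2 + σ ^ 2) / (2 * μ)) * erf (Real.sqrt (c / 2) * μ / σ) := by
  have hdens : IntervalIntegrable (fun y => 1 / √y * stdNormal (√y * μ / σ)) volume 0 c :=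
    intervalIntegrable_one_div_sqrt_mul (by fun_prop) hc.le
  have herfc : IntervalIntegrable (fun y => erfc (-√(y / 2) * μ / σ)) volume 0 c :=
    Continuous.intervalIntegrable (by fun_prop) _ _
  rw [← intervalIntegral.integral_const_mul, ← intervalIntegral.integral_const_mul,
    ← integral_add (hdens.const_mul σ) (herfc.const_mul _),
    integral_eq_sub_of_hasDeriv_right_of_le hc.le
    (Continuous.continuousOn (by fun_prop))
    (fun y hy => (hasDerivAt_expectedPassageTime hμ.ne' hσ.ne' hy.1).hasDerivWithinAt)
    ((hdens.const_mul σ).add (herfc.const_mul _))]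
  simp
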